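/- arXiv:1112.1897 — 2 statements merged into one kernel-verified Lean document; each statement's English description precedes it below -/
import Mathlib

section
/- Let Θ : ℂ → ℂ be an entire function satisfying Θ(z + π) = Θ(z) and Θ(z + πτ) = e^{-2inz} e^{-inπτ} Θ(z) for all z, where n is a positive integer and Im τ > 0. Then the complex vector space of such functions has dimension exactly n. -/
noncomputable section

open Complex

/-- The space of entire functions `Θ` satisfying `Θ(z + π) = Θ(z)` and
`Θ(z + πτ) = e^{-2inz} e^{-inπτ} Θ(z)`. -/
def thetaSpace (n : ℕ) (τ : ℂ) : Submodule ℂ (ℂ → ℂ) where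
  carrier := {Θ | Differentiable ℂ Θ ∧ (∀ z, Θ (z + Real.pi) = Θ z) ∧
    (∀ z, Θ (z + Real.pi * τ) =
      Complex.exp (-2 * I * (n : ℂ) * z) * Complex.exp (-I * (n : ℂ) * Real.pi * τ) * Θ z)}
  add_mem' := by
    rintro a b ⟨ha1, ha2, ha3⟩ ⟨hb1, hb2, hb3⟩
    refine ⟨ha1.add hb1, fun z => ?_, fun z => ?_⟩
    · simp [Pi.add_apply, ha2 z, hb2 z]
    · simp only [Pi.add_apply, ha3 z, hb3 z]; ring
  zero_mem' := by
    refine ⟨differentiable_const 0, fun z => rfl, fun z => ?_⟩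
    simp
  smul_mem' := by
    rintro c a ⟨ha1, ha2, ha3⟩
    refine ⟨ha1.const_smul c, fun z => ?_, fun z => ?_⟩
    · simp [Pi.smul_apply, ha2 z]
    · simp only [Pi.smul_apply, ha3 z, smul_eq_mul]; ring

/-! Since `Θ` is `π`-periodic, `Θ z = ∑ c_k e^{2kiz}`, and by Cauchy's theorem `c_k` may be
computed on any horizontal segment of length `π`. Computing it on the segment through `πτ`
turns the quasi-periodicity into `c_k = e^{-iπτ(n + 2k)} c_{k+n}`, so `Θ ↦ (c_0, …, c_{n-1})` is
injective: if these vanish, all `c_k` vanish, so `Θ` vanishes on `ℝ` by uniqueness of Fourier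
coefficients, hence everywhere. It is surjective because the theta functions
`θ_k z = e^{2kiz} ϑ(nz/π + kτ, nτ)`, `0 ≤ k < n`, have `c_j(θ_k) = δ_{jk}`. -/

open MeasureTheory intervalIntegral
open scoped Real Topology

theorem Differentiable.intervalIntegral_add_eq_of_periodic {E : Type*} [NormedAddCommGroup E]
    [NormedSpace ℂ E] [CompleteSpace E] {g : ℂ → E} (hg : Differentiable ℂ g) {T : ℝ}
    (hper : ∀ z, g (z + T) = g z) (w : ℂ) :
    ∫ t in (0:ℝ)..T, g (w + t) = ∫ t in (0:ℝ)..T, g t := by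
  -- Cauchy's theorem on `[0, T] × [0, Im w]` moves the segment vertically, periodicity
  -- horizontally.
  have hvert : ∫ t in (0:ℝ)..T, g (t + w.im * I) = ∫ t in (0:ℝ)..T, g t := by
    have hrect := integral_boundary_rect_eq_zero_of_differentiableOn g 0 (T + w.im * I)
      hg.differentiableOn
    simp only [zero_re, zero_im, add_re, add_im, ofReal_re, ofReal_im, mul_re, mul_im, I_re, I_im,
      mul_zero, sub_zero, zero_add, ofReal_zero, zero_mul, add_zero, mul_one, add_comm (T : ℂ),
      hper, add_sub_cancel_right, sub_eq_zero] at hrect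
    exact hrect.symm
  have hhoriz : Function.Periodic (fun t : ℝ ↦ g (t + w.im * I)) T := fun t ↦ by
    simpa [add_right_comm] using hper (t + w.im * I)
  calc ∫ t in (0:ℝ)..T, g (w + t) = ∫ t in w.re..w.re + T, g (t + w.im * I) := by
        simpa [add_right_comm _ _ (w.im * I : ℂ), re_add_im] using
          integral_comp_add_left (fun t : ℝ ↦ g (t + w.im * I)) w.re (a := 0) (b := T)
    _ = ∫ t in (0:ℝ)..0 + T, g (t + w.im * I) := hhoriz.intervalIntegral_add_eq _ _
    _ = ∫ t in (0:ℝ)..T, g t := by rw [zero_add, hvert]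

theorem AddCircle.eq_zero_of_fourierCoeff_eq_zero {T : ℝ} [Fact (0 < T)] (f : C(AddCircle T, ℂ))
    (h : ∀ k, fourierCoeff f k = 0) : f = 0 := by
  have hsum : Summable (fourierCoeff f) := by
    rw [funext h]
    exact summable_zero
  ext x
  have hx := has_pointwise_sum_fourier_series_of_summable hsum x
  simp only [h, zero_smul] at hx
  exact hx.unique hasSum_zero

theorem Differentiable.eq_zero_of_forall_ofReal {g : ℂ → ℂ} (hg : Differentiable ℂ g)
    (h : ∀ t : ℝ, g t = 0) : g = 0 := by
  have hofReal : Filter.Tendsto ofReal (𝓝[≠] 0) (𝓝[≠] 0) :=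
    continuous_ofReal.continuousWithinAt.tendsto_nhdsWithin fun _ ht ↦ by simpa using ht
  have hreal : ∃ᶠ z in 𝓝[≠] 0, g z = (0 : ℂ → ℂ) z :=
    hofReal.frequently (Filter.Eventually.of_forall h).frequently
  exact (analyticOnNhd_univ_iff_differentiable.mpr hg).eq_of_frequently_eq
    analyticOnNhd_const hreal

theorem Function.Periodic.forall_of_forall_lt {P : ℤ → Prop} {n : ℕ} (hP : Function.Periodic P n)
    (hn : 0 < n) (h : ∀ j : ℕ, j < n → P j) (k : ℤ) : P k := by
  have hmod : P (k % n) = P k := by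
    rw [Int.emod_def, mul_comm]
    exact hP.sub_int_mul_eq _
  have hlt : k % n < n := Int.emod_lt_of_pos k (by omega)
  rw [← hmod, ← Int.toNat_of_nonneg (Int.emod_nonneg k (by omega))]
  exact h _ (by omega)

theorem cexp_two_mul_I_int_mul_add_pi (k : ℤ) (z : ℂ) :
    cexp (2 * I * k * (z + π)) = cexp (2 * I * k * z) := by
  rw [show 2 * I * k * (z + π) = 2 * I * k * z + k * (2 * π * I) by ring, exp_add,
    exp_int_mul_two_pi_mul_I, mul_one]

theorem integral_cexp_two_mul_I_int_mul (ℓ : ℤ) :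
    ∫ t in (0:ℝ)..π, cexp (2 * I * ℓ * t) = if ℓ = 0 then (π : ℂ) else 0 := by
  split_ifs with hℓ
  · simp [hℓ]
  · have hc : 2 * I * ℓ ≠ 0 := by simp [hℓ, I_ne_zero]
    have hperiod := cexp_two_mul_I_int_mul_add_pi ℓ 0
    rw [zero_add, mul_zero, exp_zero] at hperiod
    simp [integral_exp_mul_complex hc, hperiod]

theorem hasSum_intervalIntegral_mul_cexp {a : ℤ → ℂ} (ha : Summable a) (e : ℤ → ℤ) {g : ℝ → ℂ}
    (hg : ∀ t : ℝ, HasSum (fun m ↦ a m * cexp (2 * I * e m * t)) (g t)) (j : ℤ) :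
    HasSum (fun m ↦ if e m = j then π * a m else 0)
      (∫ t in (0:ℝ)..π, g t * cexp (-2 * I * j * t)) := by
  have hterm (m : ℤ) : ∫ t in (0:ℝ)..π, a m * cexp (2 * I * e m * t) * cexp (-2 * I * j * t) =
      if e m = j then π * a m else 0 := by
    have hexp (t : ℝ) : a m * cexp (2 * I * e m * t) * cexp (-2 * I * j * t) =
        a m * cexp (2 * I * (e m - j : ℤ) * t) := by
      rw [mul_assoc, ← exp_add]
      push_cast
      ring_nf
    simp only [hexp, intervalIntegral.integral_const_mul, integral_cexp_two_mul_I_int_mul,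
      sub_eq_zero]
    split_ifs <;> ring
  have hnorm (m : ℤ) (t : ℝ) :
      ‖a m * cexp (2 * I * e m * t) * cexp (-2 * I * j * t)‖ = ‖a m‖ := by
    simp [norm_exp]
  simp_rw [← hterm]
  exact intervalIntegral.hasSum_integral_of_dominated_convergence (fun m _ ↦ ‖a m‖)
    (fun m ↦ (by fun_prop : Continuous _).aestronglyMeasurable)
    (fun m ↦ Filter.Eventually.of_forall fun t _ ↦ (hnorm m t).le)
    (Filter.Eventually.of_forall fun _ _ ↦ ha.norm) intervalIntegrable_const
    (Filter.Eventually.of_forall fun t _ ↦ (hg t).mul_right _)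

namespace ThetaSpace

/-- `lineCoeff k Θ w = π c_k` when `Θ z = ∑ c_k e^{2kiz}`, computed on the segment `[w, w + π]`. -/
def lineCoeff (k : ℤ) (Θ : ℂ → ℂ) (w : ℂ) : ℂ :=
  ∫ t in (0:ℝ)..π, Θ (w + t) * cexp (-2 * I * k * (w + t))

variable {n : ℕ} {τ : ℂ} {Θ : ℂ → ℂ}

theorem lineCoeff_add {Ψ : ℂ → ℂ} (hΘ : Continuous Θ) (hΨ : Continuous Ψ) (k : ℤ) (w : ℂ) :
    lineCoeff k (Θ + Ψ) w = lineCoeff k Θ w + lineCoeff k Ψ w := by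
  have hint {f : ℂ → ℂ} (hf : Continuous f) :
      IntervalIntegrable (fun t : ℝ ↦ f (w + t) * cexp (-2 * I * k * (w + t))) volume 0 π :=
    (by fun_prop : Continuous _).intervalIntegrable _ _
  simp only [lineCoeff, Pi.add_apply, add_mul, integral_add (hint hΘ) (hint hΨ)]

theorem lineCoeff_smul (c : ℂ) (k : ℤ) (w : ℂ) :
    lineCoeff k (c • Θ) w = c * lineCoeff k Θ w := by
  simp only [lineCoeff, Pi.smul_apply, smul_eq_mul, mul_assoc, intervalIntegral.integral_const_mul]

theorem lineCoeff_eq_lineCoeff_zero (hΘ : Differentiable ℂ Θ) (hper : ∀ z, Θ (z + π) = Θ z)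
    (k : ℤ) (w : ℂ) : lineCoeff k Θ w = lineCoeff k Θ 0 := by
  have hexp (z : ℂ) : cexp (-2 * I * k * (z + π)) = cexp (-2 * I * k * z) := by
    simpa using cexp_two_mul_I_int_mul_add_pi (-k) z
  simpa [lineCoeff] using Differentiable.intervalIntegral_add_eq_of_periodic
    (g := fun z ↦ Θ z * cexp (-2 * I * k * z)) (by fun_prop) (fun z ↦ by simp only [hper, hexp]) w

theorem eq_zero_of_lineCoeff_eq_zero (hΘ : Differentiable ℂ Θ) (hper : ∀ z, Θ (z + π) = Θ z)
    (h : ∀ k, lineCoeff k Θ 0 = 0) : Θ = 0 := by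
  have : Fact (0 < π) := ⟨Real.pi_pos⟩
  have hperℝ : Function.Periodic (fun t : ℝ ↦ Θ t) π := fun t ↦ by simpa using hper t
  have hF := AddCircle.eq_zero_of_fourierCoeff_eq_zero
    ⟨hperℝ.lift, continuous_coinduced_dom.mpr (hΘ.continuous.comp continuous_ofReal)⟩ fun k ↦ by
      rw [fourierCoeff_eq_intervalIntegral _ k 0, zero_add]
      refine (congrArg _ ?_).trans (smul_zero _)
      rw [← h k]
      refine integral_congr fun t _ ↦ ?_
      simp only [ContinuousMap.coe_mk, Function.Periodic.lift_coe, fourier_coe_apply, smul_eq_mul]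
      rw [zero_add, mul_comm]
      congr 2
      push_cast
      field_simp
  refine hΘ.eq_zero_of_forall_ofReal fun t ↦ ?_
  simpa using DFunLike.congr_fun hF (t : AddCircle π)

theorem lineCoeff_eq_exp_mul_lineCoeff_add (hΘ : Θ ∈ thetaSpace n τ) (k : ℤ) :
    lineCoeff k Θ 0 = cexp (-I * π * τ * (n + 2 * k)) * lineCoeff (k + n) Θ 0 := by
  obtain ⟨hd, hper, hquasi⟩ := hΘ
  rw [← lineCoeff_eq_lineCoeff_zero hd hper k (π * τ), lineCoeff, lineCoeff,
    ← intervalIntegral.integral_const_mul]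
  refine integral_congr fun t _ ↦ ?_
  have hexp : cexp (-2 * I * n * t) * cexp (-I * n * π * τ) * cexp (-2 * I * k * (t + π * τ)) =
      cexp (-I * π * τ * (n + 2 * k)) * cexp (-2 * I * (k + n : ℤ) * t) := by
    simp only [← exp_add]
    push_cast
    ring_nf
  simp only [add_comm (π * τ : ℂ), hquasi, zero_add]
  linear_combination Θ t * hexp

theorem lineCoeff_add_eq_zero_iff (hΘ : Θ ∈ thetaSpace n τ) (k : ℤ) :
    lineCoeff (k + n) Θ 0 = 0 ↔ lineCoeff k Θ 0 = 0 := by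
  rw [lineCoeff_eq_exp_mul_lineCoeff_add hΘ k, mul_eq_zero, or_iff_right (exp_ne_zero _)]

theorem eq_zero_of_lineCoeff_lt_eq_zero (hn : 0 < n) (hΘ : Θ ∈ thetaSpace n τ)
    (h : ∀ j : ℕ, j < n → lineCoeff j Θ 0 = 0) : Θ = 0 :=
  eq_zero_of_lineCoeff_eq_zero hΘ.1 hΘ.2.1 <| Function.Periodic.forall_of_forall_lt
    (P := fun k ↦ lineCoeff k Θ 0 = 0) (fun k ↦ propext (lineCoeff_add_eq_zero_iff hΘ k)) hn h

/-- `thetaBasis n τ k z = ∑ₘ e^{iπτ(nm² + 2km)} e^{2i(nm+k)z}`, a theta function whose Fourier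
coefficients are supported on `k + nℤ`. -/
def thetaBasis (n : ℕ) (τ : ℂ) (k : ℕ) (z : ℂ) : ℂ :=
  cexp (2 * I * k * z) * jacobiTheta₂ (n * z / π + k * τ) (n * τ)

theorem hasSum_thetaBasis (hnτ : 0 < (n * τ).im) (k : ℕ) (z : ℂ) :
    HasSum (fun m : ℤ ↦ jacobiTheta₂_term m (k * τ) (n * τ) * cexp (2 * I * (n * m + k : ℤ) * z))
      (thetaBasis n τ k z) := by
  have hterm (m : ℤ) :
      jacobiTheta₂_term m (k * τ) (n * τ) * cexp (2 * I * (n * m + k : ℤ) * z) =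
        cexp (2 * I * k * z) * jacobiTheta₂_term m (n * z / π + k * τ) (n * τ) := by
    simp only [jacobiTheta₂_term, ← exp_add]
    congr 1
    push_cast
    field_simp
    ring
  simp_rw [hterm]
  exact (hasSum_jacobiTheta₂_term _ hnτ).mul_left _

theorem differentiable_thetaBasis (hnτ : 0 < (n * τ).im) (k : ℕ) :
    Differentiable ℂ (thetaBasis n τ k) := fun z ↦
  (by fun_prop : Differentiable ℂ fun z ↦ cexp (2 * I * k * z)).differentiableAt.mul <|
    (differentiableAt_jacobiTheta₂_fst _ hnτ).comp z (by fun_prop)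

theorem thetaBasis_add_pi (k : ℕ) (z : ℂ) : thetaBasis n τ k (z + π) = thetaBasis n τ k z := by
  have hperiodic : Function.Periodic (jacobiTheta₂ · (n * τ)) 1 :=
    fun w ↦ jacobiTheta₂_add_left w _
  have harg : n * (z + π) / π + k * τ = (n * z / π + k * τ) + n * 1 := by
    field_simp
    ring
  have hshift : jacobiTheta₂ (n * z / π + k * τ + n * 1) (n * τ) =
      jacobiTheta₂ (n * z / π + k * τ) (n * τ) := hperiodic.nat_mul n _
  rw [thetaBasis, thetaBasis, harg, hshift, ← Int.cast_natCast k, cexp_two_mul_I_int_mul_add_pi]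

theorem thetaBasis_add_pi_mul (k : ℕ) (z : ℂ) :
    thetaBasis n τ k (z + π * τ) =
      cexp (-2 * I * n * z) * cexp (-I * n * π * τ) * thetaBasis n τ k z := by
  have harg : n * (z + π * τ) / π + k * τ = (n * z / π + k * τ) + n * τ := by
    field_simp
    ring
  have hexp : cexp (2 * I * k * (z + π * τ)) * cexp (-π * I * (n * τ + 2 * (n * z / π + k * τ))) =
      cexp (-2 * I * n * z) * cexp (-I * n * π * τ) * cexp (2 * I * k * z) := by
    simp only [← exp_add]
    congr 1
    field_simp
    ring
  rw [thetaBasis, thetaBasis, harg, jacobiTheta₂_add_left']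
  linear_combination jacobiTheta₂ (n * z / π + k * τ) (n * τ) * hexp

theorem thetaBasis_mem (hnτ : 0 < (n * τ).im) (k : ℕ) : thetaBasis n τ k ∈ thetaSpace n τ :=
  ⟨differentiable_thetaBasis hnτ k, thetaBasis_add_pi k, thetaBasis_add_pi_mul k⟩

theorem lineCoeff_thetaBasis (hn : 0 < n) (hnτ : 0 < (n * τ).im) {j k : ℕ} (hj : j < n)
    (hk : k < n) : lineCoeff j (thetaBasis n τ k) 0 = if j = k then (π : ℂ) else 0 := by
  have hsum := hasSum_intervalIntegral_mul_cexp
    ((summable_jacobiTheta₂_term_iff _ _).mpr hnτ) (fun m ↦ n * m + k)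
    (fun t ↦ hasSum_thetaBasis hnτ k t) j
  simp only [lineCoeff, zero_add]
  refine hsum.unique ?_
  split_ifs with hjk
  · subst hjk
    convert hasSum_ite_eq (0 : ℤ) (π : ℂ) using 2 with m
    by_cases hm : m = 0 <;> simp [hm, hn.ne', jacobiTheta₂_term]
  · have hfreq (m : ℤ) : (n * m + k : ℤ) ≠ j := fun h ↦ hjk <| by
      have hdvd : (n : ℤ) ∣ j - k := ⟨m, by linarith⟩
      have := Int.eq_zero_of_abs_lt_dvd hdvd (by rw [abs_lt]; omega)
      omega
    simp [hfreq, hasSum_zero]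

def coeffMap (n : ℕ) (τ : ℂ) : thetaSpace n τ →ₗ[ℂ] (Fin n → ℂ) where
  toFun Θ j := lineCoeff j Θ 0
  map_add' Θ Ψ := funext fun _ ↦ lineCoeff_add Θ.2.1.continuous Ψ.2.1.continuous _ _
  map_smul' c _ := funext fun _ ↦ lineCoeff_smul c _ _

theorem coeffMap_injective (hn : 0 < n) : Function.Injective (coeffMap n τ) := by
  refine (injective_iff_map_eq_zero _).mpr fun Θ hΘ ↦ Subtype.ext ?_
  exact eq_zero_of_lineCoeff_lt_eq_zero hn Θ.2 fun j hj ↦ congr_fun hΘ ⟨j, hj⟩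

theorem coeffMap_surjective (hn : 0 < n) (hτ : 0 < τ.im) :
    Function.Surjective (coeffMap n τ) := by
  have hnτ : 0 < (n * τ).im := by simpa using mul_pos (Nat.cast_pos.mpr hn) hτ
  intro v
  refine ⟨∑ k : Fin n, (v k / π) • ⟨thetaBasis n τ k, thetaBasis_mem hnτ k⟩, funext fun j ↦ ?_⟩
  have hπ : (π : ℂ) ≠ 0 := ofReal_ne_zero.mpr Real.pi_ne_zero
  have hcoeff (k : Fin n) : coeffMap n τ ⟨thetaBasis n τ k, thetaBasis_mem hnτ k⟩ j =
      if j = k then (π : ℂ) else 0 := by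
    simp only [coeffMap, LinearMap.coe_mk, AddHom.coe_mk, Fin.ext_iff]
    exact lineCoeff_thetaBasis hn hnτ j.2 k.2
  simp only [map_sum, map_smul, Finset.sum_apply, Pi.smul_apply, smul_eq_mul, hcoeff]
  simp [hπ]

end ThetaSpace

/-- The space of entire functions with the theta quasi-periodicity relations has
complex dimension exactly `n`. -/
theorem thetaSpace_finrank (n : ℕ) (hn : 0 < n) (τ : ℂ) (hτ : 0 < τ.im) :
    Module.finrank ℂ (thetaSpace n τ) = n := by
  rw [(LinearEquiv.ofBijective (ThetaSpace.coeffMap n τ)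
    ⟨ThetaSpace.coeffMap_injective hn, ThetaSpace.coeffMap_surjective hn hτ⟩).finrank_eq,
    Module.finrank_fin_fun]
end
end

section
/- Let (Ψ, A) be a smooth L-lattice state on ℝ², i.e., for each t ∈ L there exists a smooth g_t : ℝ² → ℝ with Ψ(x+t) = e^{ig_t(x)}Ψ(x) and A(x+t) = A(x) + ∇g_t(x). If |Ψ| > 0 on the boundary of a fundamental cell Ω of L, then the magnetic flux through Ω is quantized: ∫_Ω curl A = 2πn for some integer n. -/
noncomputable section

open Complex MeasureTheory

def pd1R (f : ℝ × ℝ → ℝ) (x : ℝ × ℝ) : ℝ := fderiv ℝ f x (1, 0)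

def pd2R (f : ℝ × ℝ → ℝ) (x : ℝ × ℝ) : ℝ := fderiv ℝ f x (0, 1)

/-- `curl A = ∂₁A₂ - ∂₂A₁`. -/
def curlV (A : ℝ × ℝ → ℝ × ℝ) (x : ℝ × ℝ) : ℝ :=
  pd1R (fun y => (A y).2) x - pd2R (fun y => (A y).1) x

/-- The fundamental cell of the lattice spanned by `t₁, t₂`. -/
def cell (t₁ t₂ : ℝ × ℝ) : Set (ℝ × ℝ) :=
  (fun p : ℝ × ℝ => p.1 • t₁ + p.2 • t₂) '' (Set.Ico 0 1 ×ˢ Set.Ico 0 1)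

open Set

namespace FluxAux

/-- The linear map sending `(a,b)` to `a•t₁+b•t₂`. -/
def Tmap (t₁ t₂ : ℝ × ℝ) : (ℝ × ℝ) →ₗ[ℝ] (ℝ × ℝ) where
  toFun p := p.1 • t₁ + p.2 • t₂
  map_add' p q := by simp [add_smul]; abel
  map_smul' c p := by simp [smul_smul, smul_add]

lemma Tmap_det (t₁ t₂ : ℝ × ℝ) : (Tmap t₁ t₂).det = t₁.1 * t₂.2 - t₁.2 * t₂.1 := by
  have hb : LinearMap.toMatrix (Module.Basis.finTwoProd ℝ) (Module.Basis.finTwoProd ℝ) (Tmap t₁ t₂)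
      = !![t₁.1, t₂.1; t₁.2, t₂.2] := by
    ext i j
    fin_cases i <;> fin_cases j <;>
      simp [LinearMap.toMatrix_apply, Module.Basis.finTwoProd_zero, Module.Basis.finTwoProd_one,
        Module.Basis.coe_finTwoProd_repr, Tmap]
  rw [← LinearMap.det_toMatrix (Module.Basis.finTwoProd ℝ), hb, Matrix.det_fin_two_of]; ring

/-- continuous version -/
def Tc (t₁ t₂ : ℝ × ℝ) : (ℝ × ℝ) →L[ℝ] (ℝ × ℝ) := (Tmap t₁ t₂).toContinuousLinearMap

lemma Tc_apply (t₁ t₂ : ℝ × ℝ) (p : ℝ × ℝ) : Tc t₁ t₂ p = p.1 • t₁ + p.2 • t₂ := rfl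

-- component derivative lemma
lemma fderiv_comp_snd (A : ℝ × ℝ → ℝ × ℝ) (hA : ContDiff ℝ (⊤ : ℕ∞) A) (x v : ℝ × ℝ) :
    fderiv ℝ (fun y => (A y).2) x v = (fderiv ℝ A x v).2 := by
  have h1 : HasFDerivAt A (fderiv ℝ A x) x := (hA.differentiable (by simp) x).hasFDerivAt
  have h2 : HasFDerivAt (fun y => (A y).2)
      ((ContinuousLinearMap.snd ℝ ℝ ℝ).comp (fderiv ℝ A x)) x :=
    (ContinuousLinearMap.snd ℝ ℝ ℝ).hasFDerivAt.comp x h1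
  rw [h2.fderiv]; rfl

lemma fderiv_comp_fst (A : ℝ × ℝ → ℝ × ℝ) (hA : ContDiff ℝ (⊤ : ℕ∞) A) (x v : ℝ × ℝ) :
    fderiv ℝ (fun y => (A y).1) x v = (fderiv ℝ A x v).1 := by
  have h1 : HasFDerivAt A (fderiv ℝ A x) x := (hA.differentiable (by simp) x).hasFDerivAt
  have h2 : HasFDerivAt (fun y => (A y).1)
      ((ContinuousLinearMap.fst ℝ ℝ ℝ).comp (fderiv ℝ A x)) x :=
    (ContinuousLinearMap.fst ℝ ℝ ℝ).hasFDerivAt.comp x h1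
  rw [h2.fderiv]; rfl

lemma curlV_eq (A : ℝ × ℝ → ℝ × ℝ) (hA : ContDiff ℝ (⊤ : ℕ∞) A) (x : ℝ × ℝ) :
    curlV A x = (fderiv ℝ A x (1, 0)).2 - (fderiv ℝ A x (0, 1)).1 := by
  rw [curlV, pd1R, pd2R, fderiv_comp_snd A hA, fderiv_comp_fst A hA]

end FluxAux

namespace FluxAux

/-- dot with a fixed vector, as a CLM -/
def dotCLM (t : ℝ × ℝ) : (ℝ × ℝ) →L[ℝ] ℝ :=
  t.1 • ContinuousLinearMap.fst ℝ ℝ ℝ + t.2 • ContinuousLinearMap.snd ℝ ℝ ℝ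

lemma dotCLM_apply (t v : ℝ × ℝ) : dotCLM t v = t.1 * v.1 + t.2 * v.2 := by
  simp [dotCLM, smul_eq_mul]

lemma basis_decomp (t : ℝ × ℝ) : t = t.1 • ((1:ℝ), (0:ℝ)) + t.2 • ((0:ℝ), (1:ℝ)) := by
  ext <;> simp

lemma clm_basis_apply (M : (ℝ × ℝ) →L[ℝ] (ℝ × ℝ)) (t : ℝ × ℝ) :
    M t = t.1 • M (1, 0) + t.2 • M (0, 1) := by
  conv_lhs => rw [basis_decomp t]
  rw [map_add, _root_.map_smul, _root_.map_smul]

lemma lin_basis_apply (M : (ℝ × ℝ) →L[ℝ] ℝ) (t : ℝ × ℝ) :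
    M t = t.1 • M (1, 0) + t.2 • M (0, 1) := by
  conv_lhs => rw [basis_decomp t]
  rw [map_add, _root_.map_smul, _root_.map_smul]

theorem core (t₁ t₂ : ℝ × ℝ)
    (hd : t₁.1 * t₂.2 - t₁.2 * t₂.1 ≠ 0)
    (hTinj : Function.Injective (Tmap t₁ t₂))
    (A : ℝ × ℝ → ℝ × ℝ) (hA : ContDiff ℝ (⊤ : ℕ∞) A)
    (g₁ g₂ : ℝ × ℝ → ℝ) (hg₁ : ContDiff ℝ (⊤ : ℕ∞) g₁) (hg₂ : ContDiff ℝ (⊤ : ℕ∞) g₂)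
    (hg₁A : ∀ x, A (x + t₁) = A x + (fderiv ℝ g₁ x (1, 0), fderiv ℝ g₁ x (0, 1)))
    (hg₂A : ∀ x, A (x + t₂) = A x + (fderiv ℝ g₂ x (1, 0), fderiv ℝ g₂ x (0, 1))) :
    (∫ x in cell t₁ t₂, curlV A x) =
      (|t₁.1 * t₂.2 - t₁.2 * t₂.1| / (t₁.1 * t₂.2 - t₁.2 * t₂.1)) *
        ((g₁ t₂ - g₁ 0) - (g₂ t₁ - g₂ 0)) := by
  set d : ℝ := t₁.1 * t₂.2 - t₁.2 * t₂.1 with hdef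
  set T : (ℝ × ℝ) →L[ℝ] (ℝ × ℝ) := Tc t₁ t₂ with hTdef
  have hT10 : T (1, 0) = t₁ := by simp [hTdef, Tc_apply]
  have hT01 : T (0, 1) = t₂ := by simp [hTdef, Tc_apply]
  -- the two components of the pulled-back 1-form
  set B1 : ℝ × ℝ → ℝ := fun p => dotCLM t₁ (A (T p)) with hB1def
  set B2 : ℝ × ℝ → ℝ := fun p => dotCLM t₂ (A (T p)) with hB2def
  set DB1 : ℝ × ℝ → (ℝ × ℝ) →L[ℝ] ℝ :=
    fun p => ((dotCLM t₁).comp (fderiv ℝ A (T p))).comp T with hDB1def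
  set DB2 : ℝ × ℝ → (ℝ × ℝ) →L[ℝ] ℝ :=
    fun p => ((dotCLM t₂).comp (fderiv ℝ A (T p))).comp T with hDB2def
  have hAd : ∀ x, HasFDerivAt A (fderiv ℝ A x) x :=
    fun x => (hA.differentiable (by simp) x).hasFDerivAt
  have hD1 : ∀ p, HasFDerivAt B1 (DB1 p) p := fun p =>
    ((dotCLM t₁).hasFDerivAt.comp _ ((hAd (T p)).comp p T.hasFDerivAt) : _)
  have hD2 : ∀ p, HasFDerivAt B2 (DB2 p) p := fun p =>
    ((dotCLM t₂).hasFDerivAt.comp _ ((hAd (T p)).comp p T.hasFDerivAt) : _)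
  -- pointwise divergence identity
  have hpoint : ∀ p : ℝ × ℝ, DB2 p (1, 0) + (-(DB1 p)) (0, 1) = d * curlV A (T p) := by
    intro p
    have h1 : DB2 p (1, 0) = dotCLM t₂ (fderiv ℝ A (T p) t₁) := by
      simp [hDB2def, hT10]
    have h2 : DB1 p (0, 1) = dotCLM t₁ (fderiv ℝ A (T p) t₂) := by
      simp [hDB1def, hT01]
    have hMt₁ := clm_basis_apply (fderiv ℝ A (T p)) t₁
    have hMt₂ := clm_basis_apply (fderiv ℝ A (T p)) t₂
    rw [ContinuousLinearMap.neg_apply, h1, h2, hMt₁, hMt₂,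
      curlV_eq A hA, dotCLM_apply, dotCLM_apply]
    simp only [Prod.smul_fst, Prod.smul_snd, Prod.fst_add, Prod.snd_add, smul_eq_mul]
    ring
  -- continuity facts
  have hMcont : Continuous fun p => fderiv ℝ A (T p) :=
    (hA.continuous_fderiv (by simp)).comp T.continuous
  have hB1cont : Continuous B1 := (dotCLM t₁).continuous.comp ((hA.continuous).comp T.continuous)
  have hB2cont : Continuous B2 := (dotCLM t₂).continuous.comp ((hA.continuous).comp T.continuous)
  have hintcont : Continuous fun p => DB2 p (1, 0) + (-(DB1 p)) (0, 1) := by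
    have c2 : Continuous fun p => DB2 p (1, 0) := by
      simp only [hDB2def, ContinuousLinearMap.comp_apply]
      exact (dotCLM t₂).continuous.comp (hMcont.clm_apply continuous_const)
    have c1 : Continuous fun p => DB1 p (0, 1) := by
      simp only [hDB1def, ContinuousLinearMap.comp_apply]
      exact (dotCLM t₁).continuous.comp (hMcont.clm_apply continuous_const)
    exact c2.add c1.neg
  -- divergence theorem on the unit square
  have hle : ((0, 0) : ℝ × ℝ) ≤ (1, 1) := ⟨zero_le_one, zero_le_one⟩
  have hdiv := integral_divergence_prod_Icc_of_hasFDerivAt_off_countable_of_le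
    B2 (fun p => -B1 p) DB2 (fun p => -(DB1 p)) ((0, 0) : ℝ × ℝ) ((1, 1) : ℝ × ℝ) hle
    ∅ Set.countable_empty hB2cont.continuousOn (hB1cont.neg.continuousOn)
    (fun x _ => hD2 x) (fun x _ => (hD1 x).neg)
    (hintcont.continuousOn.integrableOn_compact isCompact_Icc)
  -- rewrite the LHS of the divergence identity
  have hfun : (fun x : ℝ × ℝ => DB2 x (1, 0) + (-(DB1 x)) (0, 1))
      = fun x => d * curlV A (T x) := funext hpoint
  rw [hfun, integral_const_mul] at hdiv
  -- boundary terms via FTC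
  have hbd₂ : ∀ y : ℝ, B2 (1, y) - B2 (0, y) = fderiv ℝ g₁ (y • t₂) t₂ := by
    intro y
    have hT1y : T (1, y) = y • t₂ + t₁ := by
      rw [hTdef, Tc_apply]; simp; abel
    have hT0y : T (0, y) = y • t₂ := by rw [hTdef, Tc_apply]; simp
    simp only [hB2def, hT1y, hT0y, hg₁A (y • t₂), map_add]
    rw [lin_basis_apply (fderiv ℝ g₁ (y • t₂)) t₂]
    simp only [dotCLM_apply, smul_eq_mul]; ring
  have hbd₁ : ∀ x : ℝ, B1 (x, 1) - B1 (x, 0) = fderiv ℝ g₂ (x • t₁) t₁ := by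
    intro x
    have hT1x : T (x, 1) = x • t₁ + t₂ := by
      rw [hTdef, Tc_apply]; simp
    have hT0x : T (x, 0) = x • t₁ := by rw [hTdef, Tc_apply]; simp
    simp only [hB1def, hT1x, hT0x, hg₂A (x • t₁), map_add]
    rw [lin_basis_apply (fderiv ℝ g₂ (x • t₁)) t₁]
    simp only [dotCLM_apply, smul_eq_mul]; ring
  have hFTC : ∀ (g : ℝ × ℝ → ℝ) (t : ℝ × ℝ), ContDiff ℝ (⊤ : ℕ∞) g →
      (∫ y in (0:ℝ)..1, fderiv ℝ g (y • t) t) = g t - g 0 := by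
    intro g t hg
    have hder : ∀ y ∈ uIcc (0:ℝ) 1, HasDerivAt (fun y : ℝ => g (y • t))
        (fderiv ℝ g (y • t) t) y := by
      intro y _
      have h1 : HasDerivAt (fun y : ℝ => y • t) t y := by
        simpa using (hasDerivAt_id y).smul_const t
      exact ((hg.differentiable (by simp) (y • t)).hasFDerivAt).comp_hasDerivAt y h1
    have hcont : Continuous fun y : ℝ => fderiv ℝ g (y • t) t :=
      ((hg.continuous_fderiv (by simp)).comp
        (continuous_id.smul continuous_const)).clm_apply continuous_const
    rw [intervalIntegral.integral_eq_sub_of_hasDerivAt hder (hcont.intervalIntegrable 0 1)]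
    simp
  have hcont1y : ∀ c : ℝ, Continuous fun y : ℝ => B2 (c, y) :=
    fun c => hB2cont.comp (continuous_const.prodMk continuous_id)
  have hcont1x : ∀ c : ℝ, Continuous fun x : ℝ => B1 (x, c) :=
    fun c => hB1cont.comp (continuous_id.prodMk continuous_const)
  have hFTC₂ : (∫ y in (0:ℝ)..1, B2 (1, y)) - ∫ y in (0:ℝ)..1, B2 (0, y)
      = g₁ t₂ - g₁ 0 := by
    rw [← intervalIntegral.integral_sub ((hcont1y 1).intervalIntegrable 0 1)
      ((hcont1y 0).intervalIntegrable 0 1)]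
    rw [intervalIntegral.integral_congr (g := fun y => fderiv ℝ g₁ (y • t₂) t₂)
      (fun y _ => hbd₂ y)]
    exact hFTC g₁ t₂ hg₁
  have hFTC₁ : (∫ x in (0:ℝ)..1, B1 (x, 1)) - ∫ x in (0:ℝ)..1, B1 (x, 0)
      = g₂ t₁ - g₂ 0 := by
    rw [← intervalIntegral.integral_sub ((hcont1x 1).intervalIntegrable 0 1)
      ((hcont1x 0).intervalIntegrable 0 1)]
    rw [intervalIntegral.integral_congr (g := fun x => fderiv ℝ g₂ (x • t₁) t₁)
      (fun x _ => hbd₁ x)]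
    exact hFTC g₂ t₁ hg₂
  -- combine the divergence identity with the boundary computations
  have hKd : d * (∫ x in Icc ((0,0):ℝ×ℝ) ((1,1):ℝ×ℝ), curlV A (T x))
      = (g₁ t₂ - g₁ 0) - (g₂ t₁ - g₂ 0) := by
    rw [hdiv]
    simp only [intervalIntegral.integral_neg]
    linarith [hFTC₁, hFTC₂]
  -- change of variables from the cell to the unit square
  have hSqm : MeasurableSet (Ico (0:ℝ) 1 ×ˢ Ico (0:ℝ) 1) :=
    measurableSet_Ico.prod measurableSet_Ico
  have hTinj' : Function.Injective (⇑T) := hTinj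
  have hdet : T.det = d := by
    show LinearMap.det ((T : (ℝ×ℝ) →L[ℝ] (ℝ×ℝ)) : (ℝ×ℝ) →ₗ[ℝ] (ℝ×ℝ)) = d
    rw [hTdef]
    rw [show ((Tc t₁ t₂ : (ℝ×ℝ) →L[ℝ] (ℝ×ℝ)) : (ℝ×ℝ) →ₗ[ℝ] (ℝ×ℝ)) = Tmap t₁ t₂ from
      LinearMap.coe_toContinuousLinearMap _, Tmap_det]
  have hcov := integral_image_eq_integral_abs_det_fderiv_smul volume hSqm
      (fun x _ => T.hasFDerivAt.hasFDerivWithinAt) (Function.Injective.injOn hTinj')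
      (curlV A)
  have hcell : cell t₁ t₂ = (⇑T) '' (Ico (0:ℝ) 1 ×ˢ Ico (0:ℝ) 1) := rfl
  -- the half-open square and the closed square agree a.e.
  have haeeq : (Ico (0:ℝ) 1 ×ˢ Ico (0:ℝ) 1 : Set (ℝ × ℝ))
      =ᵐ[volume] Icc ((0,0):ℝ×ℝ) ((1,1):ℝ×ℝ) := by
    rw [Icc_prod_eq, MeasureTheory.ae_eq_set]
    constructor
    · refine measure_mono_null (fun p hp => ?_) (measure_empty (μ := volume))
      exact absurd ⟨⟨hp.1.1.1, le_of_lt hp.1.1.2⟩, ⟨hp.1.2.1, le_of_lt hp.1.2.2⟩⟩ hp.2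
    · have h1 : volume (({(1:ℝ)} : Set ℝ) ×ˢ (univ : Set ℝ)) = 0 := by
        rw [Measure.volume_eq_prod, Measure.prod_prod, Real.volume_singleton, zero_mul]
      have h2 : volume ((univ : Set ℝ) ×ˢ ({(1:ℝ)} : Set ℝ)) = 0 := by
        rw [Measure.volume_eq_prod, Measure.prod_prod, Real.volume_singleton, mul_zero]
      refine measure_mono_null (fun p hp => ?_) (measure_union_null h1 h2)
      obtain ⟨⟨⟨hx0, hx1⟩, hy0, hy1⟩, hn⟩ := hp
      by_cases hx : p.1 = 1
      · exact Or.inl ⟨mem_singleton_iff.mpr hx, mem_univ _⟩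
      by_cases hy : p.2 = 1
      · exact Or.inr ⟨mem_univ _, mem_singleton_iff.mpr hy⟩
      exact absurd ⟨⟨hx0, lt_of_le_of_ne hx1 hx⟩, ⟨hy0, lt_of_le_of_ne hy1 hy⟩⟩ hn
  rw [hcell, hcov]
  simp only [hdet]
  rw [integral_smul, setIntegral_congr_set haeeq, smul_eq_mul]
  rw [show (∫ x in Icc ((0,0):ℝ×ℝ) ((1,1):ℝ×ℝ), curlV A (T x))
      = ((g₁ t₂ - g₁ 0) - (g₂ t₁ - g₂ 0)) / d from by
    rw [eq_div_iff hd]; linarith [hKd]]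
  ring

end FluxAux

/-- Flux quantization: for a smooth lattice state `(Ψ, A)` with `|Ψ| > 0` on the
boundary of a fundamental cell `Ω`, the magnetic flux through `Ω` is `2πn`, `n ∈ ℤ`. -/
theorem flux_quantization
    (t₁ t₂ : ℝ × ℝ) (hindep : LinearIndependent ℝ ![t₁, t₂])
    (Ψ : ℝ × ℝ → ℂ) (hΨ : ContDiff ℝ (⊤ : ℕ∞) Ψ)
    (A : ℝ × ℝ → ℝ × ℝ) (hA : ContDiff ℝ (⊤ : ℕ∞) A)
    (hlattice : ∀ t ∈ AddSubgroup.closure ({t₁, t₂} : Set (ℝ × ℝ)),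
      ∃ g : ℝ × ℝ → ℝ, ContDiff ℝ (⊤ : ℕ∞) g ∧
        (∀ x, Ψ (x + t) = Complex.exp (I * (g x : ℝ)) * Ψ x) ∧
        (∀ x, A (x + t) = A x + (fderiv ℝ g x (1, 0), fderiv ℝ g x (0, 1))))
    (hbd : ∀ x ∈ frontier (cell t₁ t₂), Ψ x ≠ 0) :
    ∃ n : ℤ, (∫ x in cell t₁ t₂, curlV A x) = 2 * Real.pi * n := by
  have hcoef : ∀ a b : ℝ, a • t₁ + b • t₂ = 0 → a = 0 ∧ b = 0 := by
    rw [Fintype.linearIndependent_iff] at hindep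
    intro a b h
    have := hindep ![a, b] (by simpa [Fin.sum_univ_two] using h)
    exact ⟨this 0, this 1⟩
  have hd : t₁.1 * t₂.2 - t₁.2 * t₂.1 ≠ 0 := by
    intro h0
    have e1 : t₂.2 • t₁ + (-t₁.2) • t₂ = 0 := by
      apply Prod.ext <;>
        simp only [Prod.fst_add, Prod.snd_add, Prod.smul_fst, Prod.smul_snd, smul_eq_mul,
          Prod.fst_zero, Prod.snd_zero] <;> nlinarith [h0]
    have e2 : t₂.1 • t₁ + (-t₁.1) • t₂ = 0 := by
      apply Prod.ext <;>
        simp only [Prod.fst_add, Prod.snd_add, Prod.smul_fst, Prod.smul_snd, smul_eq_mul,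
          Prod.fst_zero, Prod.snd_zero] <;> nlinarith [h0]
    obtain ⟨h22, h12⟩ := hcoef _ _ e1
    obtain ⟨h21, h11⟩ := hcoef _ _ e2
    have ht₁0 : t₁ = 0 := by
      apply Prod.ext
      · simpa using neg_eq_zero.mp h11
      · simpa using neg_eq_zero.mp h12
    obtain ⟨h, _⟩ := hcoef 1 0 (by rw [ht₁0]; simp)
    exact one_ne_zero h
  have hTinj : Function.Injective (FluxAux.Tmap t₁ t₂) := by
    intro p q h
    have h0 : p.1 • t₁ + p.2 • t₂ = q.1 • t₁ + q.2 • t₂ := h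
    have h' : (p.1 - q.1) • t₁ + (p.2 - q.2) • t₂ = 0 := by
      rw [sub_smul, sub_smul, sub_add_sub_comm, h0, sub_self]
    obtain ⟨hx, hy⟩ := hcoef _ _ h'
    exact Prod.ext (sub_eq_zero.mp hx) (sub_eq_zero.mp hy)
  -- 0 is on the frontier of the cell
  have hsurj : Function.Surjective (FluxAux.Tmap t₁ t₂) :=
    LinearMap.injective_iff_surjective.mp hTinj
  let e : (ℝ × ℝ) ≃ₗ[ℝ] (ℝ × ℝ) := LinearEquiv.ofBijective _ ⟨hTinj, hsurj⟩
  let H : (ℝ × ℝ) ≃ₜ (ℝ × ℝ) := e.toContinuousLinearEquiv.toHomeomorph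
  have hfr : (0 : ℝ × ℝ) ∈ frontier (cell t₁ t₂) := by
    have hcell : cell t₁ t₂ = H '' (Set.Ico (0:ℝ) 1 ×ˢ Set.Ico (0:ℝ) 1) := rfl
    rw [hcell, ← H.image_frontier]
    refine ⟨((0:ℝ), (0:ℝ)), ⟨?_, ?_⟩, ?_⟩
    · exact subset_closure ⟨⟨le_refl 0, zero_lt_one⟩, ⟨le_refl 0, zero_lt_one⟩⟩
    · rw [interior_prod_eq, interior_Ico]
      rintro ⟨⟨h, -⟩, -⟩
      exact lt_irrefl 0 h
    · show (FluxAux.Tmap t₁ t₂) (0, 0) = 0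
      simp [FluxAux.Tmap]
  have hΨ0 : Ψ 0 ≠ 0 := hbd 0 hfr
  -- gauge functions
  obtain ⟨g₁, hg₁s, hg₁Ψ, hg₁A⟩ := hlattice t₁ (AddSubgroup.subset_closure (by simp))
  obtain ⟨g₂, hg₂s, hg₂Ψ, hg₂A⟩ := hlattice t₂ (AddSubgroup.subset_closure (by simp))
  -- cocycle condition at 0
  have hc1 : Ψ (t₂ + t₁)
      = Complex.exp (I * (g₁ t₂ : ℝ)) * (Complex.exp (I * (g₂ 0 : ℝ)) * Ψ 0) := by
    rw [hg₁Ψ t₂]; congr 1; simpa using hg₂Ψ 0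
  have hc2 : Ψ (t₁ + t₂)
      = Complex.exp (I * (g₂ t₁ : ℝ)) * (Complex.exp (I * (g₁ 0 : ℝ)) * Ψ 0) := by
    rw [hg₂Ψ t₁]; congr 1; simpa using hg₁Ψ 0
  have h' : Complex.exp (I * (g₁ t₂ : ℝ)) * Complex.exp (I * (g₂ 0 : ℝ))
      = Complex.exp (I * (g₂ t₁ : ℝ)) * Complex.exp (I * (g₁ 0 : ℝ)) := by
    have h : Complex.exp (I * (g₁ t₂ : ℝ)) * (Complex.exp (I * (g₂ 0 : ℝ)) * Ψ 0)
        = Complex.exp (I * (g₂ t₁ : ℝ)) * (Complex.exp (I * (g₁ 0 : ℝ)) * Ψ 0) := by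
      rw [← hc1, ← hc2, add_comm]
    rw [← mul_assoc, ← mul_assoc] at h
    exact mul_right_cancel₀ hΨ0 h
  have hexp : Complex.exp (I * ((g₁ t₂ + g₂ 0 : ℝ) : ℂ))
      = Complex.exp (I * ((g₂ t₁ + g₁ 0 : ℝ) : ℂ)) := by
    calc Complex.exp (I * ((g₁ t₂ + g₂ 0 : ℝ) : ℂ))
        = Complex.exp (I * (g₁ t₂ : ℝ)) * Complex.exp (I * (g₂ 0 : ℝ)) := by
          rw [← Complex.exp_add]; congr 1; push_cast; ring
      _ = Complex.exp (I * (g₂ t₁ : ℝ)) * Complex.exp (I * (g₁ 0 : ℝ)) := h'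
      _ = Complex.exp (I * ((g₂ t₁ + g₁ 0 : ℝ) : ℂ)) := by
          rw [← Complex.exp_add]; congr 1; push_cast; ring
  obtain ⟨n, hn⟩ := Complex.exp_eq_exp_iff_exists_int.mp hexp
  have h2 : ((g₁ t₂ + g₂ 0 : ℝ) : ℂ) = ((g₂ t₁ + g₁ 0 : ℝ) : ℂ) + n * (2 * Real.pi) := by
    apply mul_left_cancel₀ Complex.I_ne_zero
    rw [hn]; ring
  have hr : g₁ t₂ + g₂ 0 = g₂ t₁ + g₁ 0 + n * (2 * Real.pi) := by exact_mod_cast h2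
  -- conclude via the analytic core lemma
  have hcore := FluxAux.core t₁ t₂ hd hTinj A hA g₁ g₂ hg₁s hg₂s hg₁A hg₂A
  rcases abs_cases (t₁.1 * t₂.2 - t₁.2 * t₂.1) with ⟨habs, -⟩ | ⟨habs, -⟩
  · refine ⟨n, ?_⟩
    rw [hcore, habs, div_self hd, one_mul]
    push_cast
    linarith [hr]
  · refine ⟨-n, ?_⟩
    rw [hcore, habs, neg_div, div_self hd]
    push_cast
    linarith [hr]
end
end
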